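/- Let n, m ∈ ℕ, let C, D ∈ ℝ^{n×m}, and let T be the linear relation with graph gra T = {(Cy, Dy) : y ∈ ℝ^m}; assume T is monotone. Then: (a) the linear relation E₁ with graph gra E₁ = {(Cy, Dy) : y ∈ ℝ^m} + ({0} × ker Cᵀ) is maximally monotone, gra T ⊆ gra E₁, and dom E₁ = dom T = ran C; and (b) the linear relation E₂ with graph gra E₂ = {(Cy, Dy) : y ∈ ℝ^m} + (ker Dᵀ × {0}) is maximally monotone, gra T ⊆ gra E₂, and ran E₂ = ran T = ran D. -/

import Mathlib

open Matrix Pointwise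

/-- Sum of the eigenspaces of `M + Mᵀ` corresponding to positive eigenvalues. -/
noncomputable def Vpos {m : ℕ} (M : Matrix (Fin m) (Fin m) ℝ) :
    Submodule ℝ (Fin m → ℝ) :=
  ⨆ μ : {t : ℝ // 0 < t}, Module.End.eigenspace (Matrix.mulVecLin (M + Mᵀ)) (μ : ℝ)

/-- Eigenspace of `M + Mᵀ` for the eigenvalue `0`. -/
noncomputable def Vzero {m : ℕ} (M : Matrix (Fin m) (Fin m) ℝ) :
    Submodule ℝ (Fin m → ℝ) :=
  Module.End.eigenspace (Matrix.mulVecLin (M + Mᵀ)) 0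

/-- Sum of the eigenspaces of `M + Mᵀ` corresponding to negative eigenvalues. -/
noncomputable def Vneg {m : ℕ} (M : Matrix (Fin m) (Fin m) ℝ) :
    Submodule ℝ (Fin m → ℝ) :=
  ⨆ μ : {t : ℝ // t < 0}, Module.End.eigenspace (Matrix.mulVecLin (M + Mᵀ)) (μ : ℝ)

/-- A set `S ⊆ ℝⁿ × ℝⁿ` is monotone. -/
def IsMonotoneSet {n : ℕ} (S : Set ((Fin n → ℝ) × (Fin n → ℝ))) : Prop :=
  ∀ a ∈ S, ∀ b ∈ S, 0 ≤ (a.1 - b.1) ⬝ᵥ (a.2 - b.2)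

/-- A set `S ⊆ ℝⁿ × ℝⁿ` is maximally monotone. -/
def IsMaxMonotoneSet {n : ℕ} (S : Set ((Fin n → ℝ) × (Fin n → ℝ))) : Prop :=
  IsMonotoneSet S ∧ ∀ a, (∀ b ∈ S, 0 ≤ (a.1 - b.1) ⬝ᵥ (a.2 - b.2)) → a ∈ S

/-- Graph of the adjoint relation: `(x, x*) ∈ gra T*` iff `(x*, -x) ⟂ gra T`. -/
def adjGraph {n : ℕ} (S : Set ((Fin n → ℝ) × (Fin n → ℝ))) :
    Set ((Fin n → ℝ) × (Fin n → ℝ)) :=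
  {q | ∀ s ∈ S, q.2 ⬝ᵥ s.1 - q.1 ⬝ᵥ s.2 = 0}

/-- Domain of a relation given by its graph. -/
def domSet {n : ℕ} (S : Set ((Fin n → ℝ) × (Fin n → ℝ))) : Set (Fin n → ℝ) :=
  {x | ∃ y, (x, y) ∈ S}

/-- Range of a relation given by its graph. -/
def ranSet {n : ℕ} (S : Set ((Fin n → ℝ) × (Fin n → ℝ))) : Set (Fin n → ℝ) :=
  {y | ∃ x, (x, y) ∈ S}

/-!
Write `E₁ = gra T + ({0} × ker Cᵀ)`. It is monotone because `ker Cᵀ ⟂ ran C`, so the extra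
component adds no cross term. For maximality, let `a` be monotonically related to `E₁`. Testing
against `(0, -t u)` with `Cᵀ u = 0` gives an affine function of `t` bounded below, so
`a.1 ⟂ ker Cᵀ`, i.e. `a.1 = C y₀`. Testing against `(C (y₀ - t w), D (y₀ - t w))` gives
`0 ≤ t ⟨C w, r⟩ + t² ⟨C w, D w⟩` with `r = a.2 - D y₀`, which forces `⟨C w, r⟩ = 0` for all `w`;
hence `r ∈ ker Cᵀ` and `a = (C y₀, D y₀ + r) ∈ E₁`.

Part (b) is part (a) for the pair `(D, C)`, transported by the swap `(x, x*) ↦ (x*, x)`, which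
preserves (maximal) monotonicity and exchanges domains and ranges.
-/

lemma eq_zero_of_forall_nonneg_add_mul {c d : ℝ} (h : ∀ t : ℝ, 0 ≤ c + t * d) : d = 0 := by
  by_contra hd
  have := h (-(c + 1) / d)
  rw [div_mul_cancel₀ _ hd] at this
  linarith

lemma eq_zero_of_forall_nonneg_mul_add_sq_mul {a b : ℝ} (h : ∀ t : ℝ, 0 ≤ t * a + t ^ 2 * b) :
    a = 0 := by
  have hmin : IsLocalMin (fun t : ℝ => t * a + t ^ 2 * b) 0 :=
    Filter.Eventually.of_forall fun t => by simpa using h t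
  have hderiv : HasDerivAt (fun t : ℝ => t * a + t ^ 2 * b) a 0 := by
    simpa using
      ((hasDerivAt_id' (0 : ℝ)).mul_const a).fun_add ((hasDerivAt_pow 2 (0 : ℝ)).mul_const b)
  exact hmin.hasDerivAt_eq_zero hderiv

section
variable {ι κ : Type*} [Fintype ι] [Fintype κ]

lemma mulVec_dotProduct_eq_dotProduct_transpose_mulVec (C : Matrix ι κ ℝ) (w : κ → ℝ)
    (u : ι → ℝ) :
    (C *ᵥ w) ⬝ᵥ u = w ⬝ᵥ (Cᵀ *ᵥ u) := by
  rw [← vecMul_transpose, ← dotProduct_mulVec]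

lemma transpose_mulVec_eq_zero_of_forall_mulVec_dotProduct_eq_zero {C : Matrix ι κ ℝ}
    {r : ι → ℝ} (h : ∀ w, (C *ᵥ w) ⬝ᵥ r = 0) : Cᵀ *ᵥ r = 0 := by
  have := h (Cᵀ *ᵥ r)
  rwa [mulVec_dotProduct_eq_dotProduct_transpose_mulVec, dotProduct_self_eq_zero] at this

lemma exists_mulVec_eq_of_forall_ker_transpose_dotProduct_eq_zero {C : Matrix ι κ ℝ}
    {a : ι → ℝ} (h : ∀ u, Cᵀ *ᵥ u = 0 → a ⬝ᵥ u = 0) : ∃ y, C *ᵥ y = a := by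
  classical
  have ha : WithLp.toLp 2 a ∈ (Cᵀ.toEuclideanLin).kerᗮ := by
    rw [Submodule.mem_orthogonal]
    intro u hu
    rw [EuclideanSpace.inner_eq_star_dotProduct, star_trivial]
    exact h u.ofLp ((WithLp.toLp_eq_zero 2).mp hu)
  rw [LinearMap.orthogonal_ker, ← Matrix.toEuclideanLin_conjTranspose_eq_adjoint] at ha
  obtain ⟨y, hy⟩ := ha
  exact ⟨y.ofLp, WithLp.toLp_injective 2 hy⟩
end

lemma Set.preimage_swap_add {α β : Type*} [AddCommMonoid α] [AddCommMonoid β]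
    (S T : Set (α × β)) :
    Prod.swap ⁻¹' (S + T) = Prod.swap ⁻¹' S + Prod.swap ⁻¹' T := by
  simp only [← Set.image_swap_eq_preimage_swap]
  exact Set.image_add (AddEquiv.prodComm : α × β ≃+ β × α)

section
variable {n : ℕ}

lemma domSet_preimage_swap (S : Set ((Fin n → ℝ) × (Fin n → ℝ))) :
    domSet (Prod.swap ⁻¹' S) = ranSet S :=
  rfl

lemma IsMonotoneSet.preimage_swap {S : Set ((Fin n → ℝ) × (Fin n → ℝ))}
    (hS : IsMonotoneSet S) : IsMonotoneSet (Prod.swap ⁻¹' S) :=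
  fun a ha b hb => dotProduct_comm (a.1 - b.1) _ ▸ hS _ ha _ hb

lemma IsMaxMonotoneSet.preimage_swap {S : Set ((Fin n → ℝ) × (Fin n → ℝ))}
    (hS : IsMaxMonotoneSet S) : IsMaxMonotoneSet (Prod.swap ⁻¹' S) := by
  refine ⟨hS.1.preimage_swap, fun a ha => ?_⟩
  exact hS.2 a.swap fun b hb => dotProduct_comm (a.1 - b.2) _ ▸ ha b.swap (by simpa using hb)

lemma domSet_add_zero_prod {S : Set ((Fin n → ℝ) × (Fin n → ℝ))} {K : Set (Fin n → ℝ)}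
    (hK : K.Nonempty) : domSet (S + {0} ×ˢ K) = domSet S := by
  ext x
  constructor
  · rintro ⟨_, s, hs, k, ⟨hk, -⟩, hx⟩
    have hs₁ : s.1 = x := by simpa [Set.mem_singleton_iff.mp hk] using congrArg Prod.fst hx
    exact ⟨s.2, hs₁ ▸ hs⟩
  · rintro ⟨y, hy⟩
    obtain ⟨k, hk⟩ := hK
    exact ⟨y + k, (x, y), hy, (0, k), ⟨rfl, hk⟩, by simp⟩

lemma ranSet_add_prod_zero {S : Set ((Fin n → ℝ) × (Fin n → ℝ))} {K : Set (Fin n → ℝ)}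
    (hK : K.Nonempty) : ranSet (S + K ×ˢ {0}) = ranSet S := by
  rw [← domSet_preimage_swap, ← domSet_preimage_swap, Set.preimage_swap_add,
    Set.preimage_swap_prod]
  exact domSet_add_zero_prod hK
end

section
variable {n : ℕ} {κ : Type*} [Fintype κ] (C D : Matrix (Fin n) κ ℝ)

def matGraph : Set ((Fin n → ℝ) × (Fin n → ℝ)) :=
  Set.range fun y => (C *ᵥ y, D *ᵥ y)

lemma preimage_swap_matGraph : Prod.swap ⁻¹' matGraph C D = matGraph D C := by
  ext p
  simp [matGraph, Prod.ext_iff, and_comm]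

lemma domSet_matGraph : domSet (matGraph C D) = Set.range (C *ᵥ ·) := by
  ext x
  simp [domSet, matGraph, Prod.ext_iff]

lemma ranSet_matGraph : ranSet (matGraph C D) = Set.range (D *ᵥ ·) := by
  rw [← domSet_preimage_swap, preimage_swap_matGraph, domSet_matGraph]

variable {C D}

lemma IsMonotoneSet.mulVec_dotProduct_mulVec_nonneg (h : IsMonotoneSet (matGraph C D))
    (y : κ → ℝ) :
    0 ≤ (C *ᵥ y) ⬝ᵥ (D *ᵥ y) := by
  simpa using h _ ⟨y, rfl⟩ _ ⟨0, rfl⟩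

lemma mem_matGraph_add_zero_prod {K : Set (Fin n → ℝ)} {p : (Fin n → ℝ) × (Fin n → ℝ)} :
    p ∈ matGraph C D + {0} ×ˢ K ↔ ∃ y, ∃ u ∈ K, p = (C *ᵥ y, D *ᵥ y + u) := by
  constructor
  · rintro ⟨_, ⟨y, rfl⟩, ⟨_, u⟩, ⟨h0, hu⟩, rfl⟩
    exact ⟨y, u, hu, by simp_all⟩
  · rintro ⟨y, u, hu, rfl⟩
    exact ⟨_, ⟨y, rfl⟩, (0, u), ⟨rfl, hu⟩, by simp⟩

lemma IsMonotoneSet.matGraph_add_zero_prod_ker (h : IsMonotoneSet (matGraph C D)) :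
    IsMonotoneSet (matGraph C D + {0} ×ˢ {u | Cᵀ *ᵥ u = 0}) := by
  intro a ha b hb
  obtain ⟨y, u, hu, rfl⟩ := mem_matGraph_add_zero_prod.mp ha
  obtain ⟨z, v, hv, rfl⟩ := mem_matGraph_add_zero_prod.mp hb
  have hcross : (C *ᵥ (y - z)) ⬝ᵥ (u - v) = 0 := by
    rw [mulVec_dotProduct_eq_dotProduct_transpose_mulVec, mulVec_sub, hu.out, hv.out, sub_zero,
      dotProduct_zero]
  calc 0 ≤ (C *ᵥ (y - z)) ⬝ᵥ (D *ᵥ (y - z)) + (C *ᵥ (y - z)) ⬝ᵥ (u - v) := by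
        rw [hcross, add_zero]; exact h.mulVec_dotProduct_mulVec_nonneg _
    _ = _ := by simp only [mulVec_sub, ← dotProduct_add]; congr 1; abel

lemma IsMonotoneSet.isMaxMonotoneSet_matGraph_add_zero_prod_ker
    (h : IsMonotoneSet (matGraph C D)) :
    IsMaxMonotoneSet (matGraph C D + {0} ×ˢ {u | Cᵀ *ᵥ u = 0}) := by
  refine ⟨h.matGraph_add_zero_prod_ker, fun a ha => ?_⟩
  have hperp : ∀ u, Cᵀ *ᵥ u = 0 → a.1 ⬝ᵥ u = 0 := fun u hu =>
    eq_zero_of_forall_nonneg_add_mul fun t => by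
      have hmem : ((0 : Fin n → ℝ), -(t • u)) ∈ matGraph C D + {0} ×ˢ {u | Cᵀ *ᵥ u = 0} :=
        mem_matGraph_add_zero_prod.mpr ⟨0, -(t • u), by simp [mulVec_neg, mulVec_smul, hu], by simp⟩
      simpa [dotProduct_add, dotProduct_smul] using ha _ hmem
  obtain ⟨y₀, hy₀⟩ := exists_mulVec_eq_of_forall_ker_transpose_dotProduct_eq_zero hperp
  have hker : Cᵀ *ᵥ (a.2 - D *ᵥ y₀) = 0 :=
    transpose_mulVec_eq_zero_of_forall_mulVec_dotProduct_eq_zero fun w =>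
      eq_zero_of_forall_nonneg_mul_add_sq_mul (b := (C *ᵥ w) ⬝ᵥ (D *ᵥ w)) fun t => by
        have hexpand : (a.1 - C *ᵥ (y₀ - t • w)) ⬝ᵥ (a.2 - (D *ᵥ (y₀ - t • w) + 0)) =
            t * ((C *ᵥ w) ⬝ᵥ (a.2 - D *ᵥ y₀)) + t ^ 2 * ((C *ᵥ w) ⬝ᵥ (D *ᵥ w)) := by
          simp only [← hy₀, mulVec_sub, mulVec_smul, add_zero, sub_sub_cancel, sub_sub_eq_add_sub,
            add_sub_right_comm, smul_dotProduct, dotProduct_add, dotProduct_smul, smul_eq_mul]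
          ring
        exact hexpand ▸ ha _ (mem_matGraph_add_zero_prod.mpr ⟨y₀ - t • w, 0, mulVec_zero _, rfl⟩)
  exact mem_matGraph_add_zero_prod.mpr ⟨y₀, _, hker, by ext <;> simp [hy₀]⟩
end

/-- let `gra T = {(Cy, Dy) : y ∈ ℝ^m}` be monotone. Then
(a) `E₁` with `gra E₁ = gra T + ({0} × ker Cᵀ)` is maximally monotone,
`gra T ⊆ gra E₁`, `dom E₁ = dom T = ran C`; and
(b) `E₂` with `gra E₂ = gra T + (ker Dᵀ × {0})` is maximally monotone,
`gra T ⊆ gra E₂`, `ran E₂ = ran T = ran D`. -/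
theorem stmt19 {n m : ℕ} (C D : Matrix (Fin n) (Fin m) ℝ)
    (hmono : IsMonotoneSet (Set.range (fun y : Fin m → ℝ => (C *ᵥ y, D *ᵥ y)))) :
    (IsMaxMonotoneSet (Set.range (fun y : Fin m → ℝ => (C *ᵥ y, D *ᵥ y)) +
        ({(0 : Fin n → ℝ)} ×ˢ {u : Fin n → ℝ | Cᵀ *ᵥ u = 0})) ∧
      Set.range (fun y : Fin m → ℝ => (C *ᵥ y, D *ᵥ y)) ⊆
        Set.range (fun y : Fin m → ℝ => (C *ᵥ y, D *ᵥ y)) +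
          ({(0 : Fin n → ℝ)} ×ˢ {u : Fin n → ℝ | Cᵀ *ᵥ u = 0}) ∧
      domSet (Set.range (fun y : Fin m → ℝ => (C *ᵥ y, D *ᵥ y)) +
          ({(0 : Fin n → ℝ)} ×ˢ {u : Fin n → ℝ | Cᵀ *ᵥ u = 0})) =
        domSet (Set.range (fun y : Fin m → ℝ => (C *ᵥ y, D *ᵥ y))) ∧
      domSet (Set.range (fun y : Fin m → ℝ => (C *ᵥ y, D *ᵥ y))) =
        Set.range (fun y : Fin m → ℝ => C *ᵥ y)) ∧
    (IsMaxMonotoneSet (Set.range (fun y : Fin m → ℝ => (C *ᵥ y, D *ᵥ y)) +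
        ({u : Fin n → ℝ | Dᵀ *ᵥ u = 0} ×ˢ {(0 : Fin n → ℝ)})) ∧
      Set.range (fun y : Fin m → ℝ => (C *ᵥ y, D *ᵥ y)) ⊆
        Set.range (fun y : Fin m → ℝ => (C *ᵥ y, D *ᵥ y)) +
          ({u : Fin n → ℝ | Dᵀ *ᵥ u = 0} ×ˢ {(0 : Fin n → ℝ)}) ∧
      ranSet (Set.range (fun y : Fin m → ℝ => (C *ᵥ y, D *ᵥ y)) +
          ({u : Fin n → ℝ | Dᵀ *ᵥ u = 0} ×ˢ {(0 : Fin n → ℝ)})) =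
        ranSet (Set.range (fun y : Fin m → ℝ => (C *ᵥ y, D *ᵥ y))) ∧
      ranSet (Set.range (fun y : Fin m → ℝ => (C *ᵥ y, D *ᵥ y))) =
        Set.range (fun y : Fin m → ℝ => D *ᵥ y)) := by
  have hker : ∀ M : Matrix (Fin n) (Fin m) ℝ, 0 ∈ {u : Fin n → ℝ | Mᵀ *ᵥ u = 0} :=
    fun M => mulVec_zero _
  have hmono' : IsMonotoneSet (matGraph D C) := by
    rw [← preimage_swap_matGraph]
    exact hmono.preimage_swap
  have hmax₂ := hmono'.isMaxMonotoneSet_matGraph_add_zero_prod_ker.preimage_swap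
  rw [Set.preimage_swap_add, preimage_swap_matGraph, Set.preimage_swap_prod] at hmax₂
  exact ⟨⟨hmono.isMaxMonotoneSet_matGraph_add_zero_prod_ker, Set.subset_add_left _ ⟨rfl, hker C⟩,
      domSet_add_zero_prod ⟨0, hker C⟩, domSet_matGraph C D⟩,
    ⟨hmax₂, Set.subset_add_left _ ⟨hker D, rfl⟩, ranSet_add_prod_zero ⟨0, hker D⟩,
      ranSet_matGraph C D⟩⟩
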